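/- With notation from the counterexample construction, every fiber of f : X → S_ω is compact: f⁻¹(0) = (ω+1)×{ω} ∩ X is homeomorphic to ω+1, and each fiber f⁻¹(⟨a,b⟩) = ((ω+1)×{j}) \ (ξ(j)×A_{ξ(j)}) ∩ X is a convergent sequence with its limit, hence compact. -/

import Mathlib

open Filter Topology

/-- `L g` inside `(ω+1)²` (realized as `ℕ∞ × ℕ∞`): the points `⟨n,k⟩` with `n,k` finite
and `k ≥ g n`. -/
def Lhat (g : ℕ → ℕ) : Set (ℕ∞ × ℕ∞) :=
  {x | ∃ n k : ℕ, x = ((n : ℕ∞), (k : ℕ∞)) ∧ g n ≤ k}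

/-- The refined topology on `(ω+1)²`: generated by the product topology together with
the sets `((ω+1) × {ω}) ∪ L g`. -/
def refinedTop : TopologicalSpace (ℕ∞ × ℕ∞) :=
  TopologicalSpace.generateFrom
    ({s | IsOpen s} ∪
     {s | ∃ g : ℕ → ℕ, s = (Set.univ ×ˢ ({(⊤ : ℕ∞)} : Set ℕ∞)) ∪ Lhat g})

/-- The removed set `⋃ i (i × A i)`. -/
def badSet (A : ℕ → Set ℕ) : Set (ℕ∞ × ℕ∞) :=
  {x | ∃ i m k : ℕ, m < i ∧ k ∈ A i ∧ x = ((m : ℕ∞), (k : ℕ∞))}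

/-- The underlying set of the counterexample space `X = (ω+1)² \ ⋃ i (i × A i)`. -/
def Xc (A : ℕ → Set ℕ) : Type := {x : ℕ∞ × ℕ∞ // x ∉ badSet A}

/-- The subspace topology on `X` induced by the refined topology. -/
def XcTop (A : ℕ → Set ℕ) : TopologicalSpace (Xc A) :=
  refinedTop.induced Subtype.val

/-- The sequential fan `S_ω` as `{0} ∪ (ℕ × ℕ)` (with `none` playing the role of `0`),
where `L g = {⟨n,k⟩ : k ≥ g n}`. -/
def fanTopology : TopologicalSpace (Option (ℕ × ℕ)) :=
  TopologicalSpace.generateFrom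
    ({s | ∃ a : ℕ × ℕ, s = {some a}} ∪
     {s | ∃ g : ℕ → ℕ, s = insert none (Option.some '' {x : ℕ × ℕ | g x.1 ≤ x.2})})

/-!
`F x` depends only on the row `x.2` of `x`, through a map `ω+1 → S_ω` that is injective because
each `f i` is, so the nonempty fibres of `F` are the rows `X ∩ ((ω+1) × {c})`. On a row the refined
topology agrees with the product topology: the extra open sets contain the whole row `ω` and meet
any other row in a subset of `ω × ω`, whose points are isolated in `(ω+1)²`. The removed set also
lies in `ω × ω`, so a row of `X` is closed in the compact space `(ω+1)²`.
-/

open Set Function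

lemma ENat.isOpen_of_subset_ne_top_prod {s : Set (ℕ∞ × ℕ∞)} (hs : s ⊆ {⊤}ᶜ ×ˢ {⊤}ᶜ) :
    IsOpen s := by
  rw [← biUnion_of_singleton s]
  refine isOpen_biUnion fun p hp => ?_
  rw [← singleton_prod_singleton]
  exact (ENat.isOpen_singleton (hs hp).1).prod (ENat.isOpen_singleton (hs hp).2)

lemma isOpen_Lhat (g : ℕ → ℕ) : IsOpen (Lhat g) := by
  refine ENat.isOpen_of_subset_ne_top_prod ?_
  rintro _ ⟨n, k, rfl, -⟩
  exact ⟨ENat.natCast_ne_top n, ENat.natCast_ne_top k⟩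

lemma isOpen_badSet (A : ℕ → Set ℕ) : IsOpen (badSet A) := by
  refine ENat.isOpen_of_subset_ne_top_prod ?_
  rintro _ ⟨-, m, k, -, -, rfl⟩
  exact ⟨ENat.natCast_ne_top m, ENat.natCast_ne_top k⟩

lemma refinedTop_le_instTopologicalSpaceProd :
    refinedTop ≤ (instTopologicalSpaceProd : TopologicalSpace (ℕ∞ × ℕ∞)) :=
  fun _ hs => TopologicalSpace.isOpen_generateFrom_of_mem (Or.inl hs)

lemma induced_refinedTop_eq_of_subset_row {s : Set (ℕ∞ × ℕ∞)} {c : ℕ∞}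
    (hs : s ⊆ univ ×ˢ {c}) :
    refinedTop.induced ((↑) : s → ℕ∞ × ℕ∞) = instTopologicalSpaceSubtype := by
  refine le_antisymm (induced_mono refinedTop_le_instTopologicalSpaceProd)
    (le_induced_generateFrom ?_)
  rintro U (hU | ⟨g, rfl⟩)
  · exact isOpen_induced hU
  rcases eq_or_ne c ⊤ with rfl | hc
  · have huniv : ((↑) : s → ℕ∞ × ℕ∞) ⁻¹' (univ ×ˢ {⊤} ∪ Lhat g) = univ :=
      eq_univ_of_forall fun p => Or.inl (hs p.2)
    rw [huniv]
    exact isOpen_univ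
  · have hempty : ((↑) : s → ℕ∞ × ℕ∞) ⁻¹' (univ ×ˢ {⊤}) = ∅ :=
      eq_empty_of_forall_notMem fun p hp => hc ((hs p.2).2.symm.trans hp.2)
    rw [preimage_union, hempty, empty_union]
    exact isOpen_induced (isOpen_Lhat g)

lemma IsCompact.refinedTop_of_subset_row {s : Set (ℕ∞ × ℕ∞)} {c : ℕ∞}
    (hs : s ⊆ univ ×ˢ {c}) (hK : IsCompact s) : @IsCompact _ refinedTop s := by
  rw [isCompact_iff_compactSpace, ← induced_refinedTop_eq_of_subset_row hs] at hK
  exact (@isCompact_iff_compactSpace _ refinedTop s).2 hK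

lemma isCompact_row (A : ℕ → Set ℕ) (c : ℕ∞) :
    @IsCompact (Xc A) (XcTop A) ((fun x : Xc A => x.1.2) ⁻¹' {c}) := by
  rw [@Topology.IsInducing.isCompact_iff _ _ (XcTop A) refinedTop _ _
    (@Topology.IsInducing.induced _ _ refinedTop (Subtype.val : Xc A → ℕ∞ × ℕ∞))]
  have himage : (Subtype.val : Xc A → ℕ∞ × ℕ∞) '' ((fun x : Xc A => x.1.2) ⁻¹' {c}) =
      univ ×ˢ {c} ∩ (badSet A)ᶜ := by
    ext p
    constructor
    · rintro ⟨x, hx, rfl⟩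
      exact ⟨⟨trivial, hx⟩, x.2⟩
    · rintro ⟨⟨-, hp⟩, hpX⟩
      exact ⟨⟨p, hpX⟩, hp, rfl⟩
  exact himage ▸ ((isClosed_univ.prod isClosed_singleton).inter
    (isOpen_badSet A).isClosed_compl).isCompact.refinedTop_of_subset_row inter_subset_left

lemma injective_prodMk_index_apply {α β ι : Type*} {A : ι → Set α} (f : ∀ i, A i → β)
    (hf : ∀ i, Injective (f i)) (ξ : α → ι) (hξ : ∀ a, a ∈ A (ξ a)) :
    Injective fun a => (ξ a, f (ξ a) ⟨a, hξ a⟩) := by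
  have eq_of_apply_eq : ∀ {a b : α} (i j : ι) (ha : a ∈ A i) (hb : b ∈ A j),
      i = j → f i ⟨a, ha⟩ = f j ⟨b, hb⟩ → a = b := by
    rintro a b i _ ha hb rfl h
    exact congrArg Subtype.val (hf i h)
  intro a b h
  exact eq_of_apply_eq _ _ _ _ (congrArg Prod.fst h) (congrArg Prod.snd h)

theorem f_fibers_compact_general (A : ℕ → Set ℕ)
    (f : ∀ i, (A i) ≃o ℕ)
    (ξ : ℕ → ℕ) (hξ : ∀ k, k ∈ A (ξ k))
    (F : Xc A → Option (ℕ × ℕ))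
    (hFtop : ∀ x : Xc A, x.1.2 = ⊤ → F x = none)
    (hFnat : ∀ (x : Xc A) (k : ℕ), x.1.2 = (k : ℕ∞) →
      F x = some (ξ k, (f (ξ k)) ⟨k, hξ k⟩)) :
    ∀ y : Option (ℕ × ℕ), @IsCompact (Xc A) (XcTop A) (F ⁻¹' {y}) := by
  obtain ⟨G, hG, hF⟩ : ∃ G : ℕ∞ → Option (ℕ × ℕ), Injective G ∧ ∀ x, F x = G x.1.2 := by
    refine ⟨Option.map fun k => (ξ k, f (ξ k) ⟨k, hξ k⟩),
      Option.map_injective (injective_prodMk_index_apply (fun i => f i) (fun i => (f i).injective) ξ hξ),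
      fun x => ?_⟩
    cases h : x.1.2 using ENat.recTopCoe with
    | top => exact hFtop x h
    | coe k => exact hFnat x k h
  intro y
  rcases (F ⁻¹' {y}).eq_empty_or_nonempty with hempty | ⟨x₀, rfl⟩
  · rw [hempty]
    exact @isCompact_empty _ (XcTop A)
  · have hfiber : F ⁻¹' {F x₀} = (fun x : Xc A => x.1.2) ⁻¹' {x₀.1.2} := by
      ext x
      simp only [mem_preimage, mem_singleton_iff, hF, hG.eq_iff]
    rw [hfiber]
    exact isCompact_row A _

/-- Every fiber of the map `f : X → S_ω` is compact. -/
theorem f_fibers_compact (A : ℕ → Set ℕ)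
    (hInf : ∀ i, (A i).Infinite)
    (hDisj : Pairwise fun i j => Disjoint (A i) (A j))
    (hUnion : (⋃ i, A i) = Set.univ)
    (hlt : ∀ i j, i < j → ∀ g : (A i) ≃o (A j), ∀ n : A i, (n : ℕ) < (g n : ℕ))
    (f : ∀ i, (A i) ≃o ℕ)
    (ξ : ℕ → ℕ) (hξ : ∀ k, k ∈ A (ξ k))
    (F : Xc A → Option (ℕ × ℕ))
    (hFtop : ∀ x : Xc A, x.1.2 = ⊤ → F x = none)
    (hFnat : ∀ (x : Xc A) (k : ℕ), x.1.2 = (k : ℕ∞) →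
      F x = some (ξ k, (f (ξ k)) ⟨k, hξ k⟩)) :
    ∀ y : Option (ℕ × ℕ), @IsCompact (Xc A) (XcTop A) (F ⁻¹' {y}) :=
  f_fibers_compact_general A f ξ hξ F hFtop hFnat
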